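/- Let φ be a proper partial (Δ+1)-edge-coloring and let xy be a (φ,αβ)-hopeful uncolored edge (not φ-happy, with both endpoints of degree < 2 in the αβ-colored subgraph). Let P(x,y,φ,αβ) be the chain consisting of xy followed by the edges of the αβ-alternating path component of y, traversed starting from y. Then P(x,y,φ,αβ) is φ-shiftable. -/

import Mathlib

open SimpleGraph

variable {V : Type*} [DecidableEq V]

/-- Two edges (as unordered pairs of vertices) are adjacent: distinct and sharing an endpoint. -/
def EdgeAdj (e f : Sym2 V) : Prop := e ≠ f ∧ ∃ v, v ∈ e ∧ v ∈ f

/-- A proper partial edge-coloring of `G` with colors `{1,…,Δ+1}` (as `Fin (Δ+1)`):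
its domain consists of edges of `G`, and adjacent colored edges get distinct colors. -/
def IsProperPartial (G : SimpleGraph V) (Δ : ℕ)
    (φ : Sym2 V → Option (Fin (Δ + 1))) : Prop :=
  (∀ e, (φ e).isSome → e ∈ G.edgeSet) ∧
  ∀ e f, EdgeAdj e f → (φ e).isSome → φ e ≠ φ f

/-- The set `M(φ,x)` of colors missing at `x`. -/
def missingColors (G : SimpleGraph V) (Δ : ℕ)
    (φ : Sym2 V → Option (Fin (Δ + 1))) (x : V) : Set (Fin (Δ + 1)) :=
  {c | ∀ y, G.Adj x y → φ s(x, y) ≠ some c}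

/-- `Shift φ e₀ e₁`: move the color of `e₁` to `e₀`, uncolor `e₁`, keep all else. -/
def Shift {α : Type*} (φ : Sym2 V → Option α) (e₀ e₁ : Sym2 V) :
    Sym2 V → Option α :=
  fun e => if e = e₀ then φ e₁ else if e = e₁ then none else φ e

/-- `(e₀, e₁)` is a `φ`-shiftable pair. -/
def ShiftablePair (G : SimpleGraph V) (Δ : ℕ) (φ : Sym2 V → Option (Fin (Δ + 1)))
    (e₀ e₁ : Sym2 V) : Prop :=
  EdgeAdj e₀ e₁ ∧ e₀ ∈ G.edgeSet ∧ φ e₀ = none ∧ (φ e₁).isSome ∧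
    IsProperPartial G Δ (Shift φ e₀ e₁)

/-- Shifting a coloring along a chain (list of edges). -/
def ShiftChain {α : Type*} : List (Sym2 V) → (Sym2 V → Option α) → (Sym2 V → Option α)
  | [], φ => φ
  | [_], φ => φ
  | e₀ :: e₁ :: rest, φ => ShiftChain (e₁ :: rest) (Shift φ e₀ e₁)

/-- A chain is `φ`-shiftable: each consecutive pair is shiftable w.r.t. the current coloring
(for a single-edge chain we require the edge to be an uncolored edge of `G`). -/
def ChainShiftable (G : SimpleGraph V) (Δ : ℕ) :
    List (Sym2 V) → (Sym2 V → Option (Fin (Δ + 1))) → Prop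
  | [], _ => True
  | [e], φ => φ e = none ∧ e ∈ G.edgeSet
  | e₀ :: e₁ :: rest, φ =>
      ShiftablePair G Δ φ e₀ e₁ ∧ ChainShiftable G Δ (e₁ :: rest) (Shift φ e₀ e₁)

/-- The spanning subgraph `G(φ, αβ)` of edges colored `α` or `β`. -/
def abSub (G : SimpleGraph V) (Δ : ℕ) (φ : Sym2 V → Option (Fin (Δ + 1)))
    (α β : Fin (Δ + 1)) : SimpleGraph V where
  Adj x y := G.Adj x y ∧ (φ s(x, y) = some α ∨ φ s(x, y) = some β)
  symm := by
    refine ⟨fun x y h => ?_⟩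
    refine ⟨h.1.symm, ?_⟩
    rw [Sym2.eq_swap]
    exact h.2
  loopless := ⟨fun x h => G.loopless.irrefl x h.1⟩

/-- A chain is `φ`-happy: it is `φ`-shiftable and its last edge is happy after shifting. -/
def ChainHappy (G : SimpleGraph V) (Δ : ℕ) (C : List (Sym2 V))
    (φ : Sym2 V → Option (Fin (Δ + 1))) : Prop :=
  ChainShiftable G Δ C φ ∧
    ∃ x y : V, C.getLast? = some s(x, y) ∧
      (missingColors G Δ (ShiftChain C φ) x ∩ missingColors G Δ (ShiftChain C φ) y).Nonempty

/-! Shifting along `xy, yv₁, v₁v₂, …` moves the colour of each path edge one step back towards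
`x`. The first step is legal because `x` carries no edge of the colour `c` of `yv₁`: otherwise,
`x` and `y` having at most one `αβ`-edge each, the other colour of `{α, β}` would be missing at
both, and `xy` would be happy. A later step, colouring `vᵢ₋₁vᵢ` with the colour of `vᵢvᵢ₊₁`, is
legal because the path alternates: at `vᵢ₋₁` the new colour differs from the one just moved onto
`vᵢ₋₂vᵢ₋₁`, and the remaining `αβ`-edges at `vᵢ₋₁` and `vᵢ` are still path edges. Being a leaf of the `αβ`-subgraph, `x` can only lie on the path
as its endpoint `z`, so earlier shifts never disturb the inner vertices still ahead. -/

section ProperColoring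

variable {U : Type*} {G : SimpleGraph U} {Δ : ℕ} {φ : Sym2 U → Option (Fin (Δ + 1))}
  {α β : Fin (Δ + 1)}

theorem IsProperPartial.apply_ne_of_mem (hφ : IsProperPartial G Δ φ) {e f : Sym2 U} {w : U}
    (hne : e ≠ f) (he : w ∈ e) (hf : w ∈ f) (hs : (φ e).isSome) : φ e ≠ φ f :=
  hφ.2 e f ⟨hne, w, he, hf⟩ hs

theorem IsProperPartial.eq_or_eq_of_mem_of_colors (hφ : IsProperPartial G Δ φ) {w : U}
    {f e₁ e₂ : Sym2 U} (hf : w ∈ f) (h₁ : w ∈ e₁) (h₂ : w ∈ e₂) (h₁₂ : e₁ ≠ e₂)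
    (cf : φ f = some α ∨ φ f = some β) (c₁ : φ e₁ = some α ∨ φ e₁ = some β)
    (c₂ : φ e₂ = some α ∨ φ e₂ = some β) : f = e₁ ∨ f = e₂ := by
  by_contra! hne
  have d₁ := hφ.apply_ne_of_mem hne.1 hf h₁ (by rcases cf with c | c <;> simp [c])
  have d₂ := hφ.apply_ne_of_mem hne.2 hf h₂ (by rcases cf with c | c <;> simp [c])
  have d₁₂ := hφ.apply_ne_of_mem h₁₂ h₁ h₂ (by rcases c₁ with c | c <;> simp [c])
  rcases cf with cf | cf <;> rcases c₁ with c₁ | c₁ <;> rcases c₂ with c₂ | c₂ <;> simp_all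

theorem abSub_comm : abSub G Δ φ α β = abSub G Δ φ β α := by
  ext
  simp only [abSub, or_comm]

theorem exists_abSub_adj_of_mem (hφ : IsProperPartial G Δ φ) {x : U} {f : Sym2 U}
    (hx : x ∈ f) (hc : φ f = some α ∨ φ f = some β) :
    ∃ a, f = s(x, a) ∧ (abSub G Δ φ α β).Adj x a := by
  obtain ⟨a, rfl⟩ := Sym2.mem_iff_exists.1 hx
  exact ⟨a, rfl, G.mem_edgeSet.1 (hφ.1 _ (by rcases hc with c | c <;> simp [c])), hc⟩

theorem eq_of_abSub_adj [Finite U] {x a b : U}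
    (hx : ((abSub G Δ φ α β).neighborSet x).ncard < 2)
    (ha : (abSub G Δ φ α β).Adj x a) (hb : (abSub G Δ φ α β).Adj x b) : a = b :=
  (Set.ncard_le_one_iff (s := (abSub G Δ φ α β).neighborSet x)).1 (by omega) ha hb

theorem mem_missingColors_of_abSub_adj [Finite U] (hab : α ≠ β) {x a : U}
    (hx : ((abSub G Δ φ α β).neighborSet x).ncard < 2) (ha : (abSub G Δ φ α β).Adj x a)
    (hca : φ s(x, a) = some α) : β ∈ missingColors G Δ φ x := by
  intro b hb hcb
  obtain rfl := eq_of_abSub_adj hx ha ⟨hb, Or.inr hcb⟩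
  exact hab (Option.some_injective _ (hca.symm.trans hcb))

theorem inter_missingColors_nonempty_of_abSub_adj [Finite U] (hab : α ≠ β) {x y a b : U}
    (hx : ((abSub G Δ φ α β).neighborSet x).ncard < 2)
    (hy : ((abSub G Δ φ α β).neighborSet y).ncard < 2)
    (ha : (abSub G Δ φ α β).Adj x a) (hb : (abSub G Δ φ α β).Adj y b)
    (heq : φ s(x, a) = φ s(y, b)) :
    (missingColors G Δ φ x ∩ missingColors G Δ φ y).Nonempty := by
  rcases hb.2 with hc | hc
  · exact ⟨β, mem_missingColors_of_abSub_adj hab hx ha (heq.trans hc),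
      mem_missingColors_of_abSub_adj hab hy hb hc⟩
  · rw [abSub_comm] at hx hy ha hb
    exact ⟨α, mem_missingColors_of_abSub_adj hab.symm hx ha (heq.trans hc),
      mem_missingColors_of_abSub_adj hab.symm hy hb hc⟩

theorem SimpleGraph.Walk.IsPath.two_le_ncard_neighborSet [Finite U] {H : SimpleGraph U}
    {x y z : U} {p : H.Walk y z} (hp : p.IsPath) (hx : x ∈ p.support) (hxy : x ≠ y)
    (hxz : x ≠ z) : 2 ≤ (H.neighborSet x).ncard := by
  obtain ⟨i, rfl, hi⟩ := Walk.mem_support_iff_exists_getVert.1 hx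
  have hi₀ : i ≠ 0 := by rintro rfl; exact hxy p.getVert_zero
  have hi₁ : i < p.length := lt_of_le_of_ne hi fun h => hxz (h ▸ p.getVert_length)
  rw [← hp.ncard_neighborSet_toSubgraph_internal_eq_two hi₀ hi₁]
  exact Set.ncard_le_ncard (p.toSubgraph.neighborSet_subset _)

end ProperColoring

section Shifting

variable {Δ : ℕ} {G : SimpleGraph V} {φ ψ : Sym2 V → Option (Fin (Δ + 1))} {α β : Fin (Δ + 1)}

@[simp]
theorem shift_apply_left {γ : Type*} (c : Sym2 V → Option γ) (e₀ e₁ : Sym2 V) :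
    Shift c e₀ e₁ e₀ = c e₁ := by
  simp [Shift]

theorem shift_apply_right {γ : Type*} (c : Sym2 V → Option γ) {e₀ e₁ : Sym2 V} (h : e₁ ≠ e₀) :
    Shift c e₀ e₁ e₁ = none := by
  simp [Shift, h]

theorem shift_apply_of_ne {γ : Type*} (c : Sym2 V → Option γ) {e₀ e₁ f : Sym2 V} (h₀ : f ≠ e₀)
    (h₁ : f ≠ e₁) : Shift c e₀ e₁ f = c f := by
  simp [Shift, h₀, h₁]

theorem IsProperPartial.shift (hψ : IsProperPartial G Δ ψ) {e₀ e₁ : Sym2 V}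
    (he₀ : e₀ ∈ G.edgeSet) (hcond : ∀ f, EdgeAdj f e₀ → f ≠ e₁ → ψ f ≠ ψ e₁) :
    IsProperPartial G Δ (Shift ψ e₀ e₁) := by
  refine ⟨fun e hs => ?_, fun e f hef hs => ?_⟩
  · unfold Shift at hs
    split_ifs at hs with h₀
    · exact h₀ ▸ he₀
    · simp at hs
    · exact hψ.1 e hs
  · have hfe : EdgeAdj f e := ⟨hef.1.symm, hef.2.imp fun _ h => h.symm⟩
    have hne := hef.1
    have hψef := hψ.2 e f hef
    unfold Shift at hs ⊢
    split_ifs at hs ⊢ <;> subst_vars <;> simp_all [Ne.symm, Option.ne_none_iff_isSome]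

theorem shiftablePair_of_colors {u v w : V} (hψ : IsProperPartial G Δ ψ) (huv : G.Adj u v)
    (h₀ : ψ s(u, v) = none) (h₁ : ψ s(v, w) = some α ∨ ψ s(v, w) = some β)
    (hv : ∀ f, v ∈ f → f ≠ s(v, w) → ¬(ψ f = some α ∨ ψ f = some β))
    (hu : ∀ f, u ∈ f → ψ f ≠ ψ s(v, w)) : ShiftablePair G Δ ψ s(u, v) s(v, w) := by
  have hs : (ψ s(v, w)).isSome := by rcases h₁ with c | c <;> simp [c]
  have hne : s(u, v) ≠ s(v, w) := fun h => by simp [← h, h₀] at hs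
  refine ⟨⟨hne, v, Sym2.mem_mk_right u v, Sym2.mem_mk_left v w⟩, G.mem_edgeSet.2 huv, h₀, hs,
    hψ.shift (G.mem_edgeSet.2 huv) ?_⟩
  rintro f ⟨-, t, htf, ht⟩ hf
  rcases Sym2.mem_iff.1 ht with rfl | rfl
  · exact hu f htf
  · exact fun h => hv f htf hf (h ▸ h₁)

theorem not_colors_shift_of_mem {u v w w₂ : V} (hφ : IsProperPartial G Δ φ) (huw : u ≠ w)
    (hvw : v ≠ w) (h₁ : φ s(v, w) = some α ∨ φ s(v, w) = some β)
    (h₂ : φ s(w, w₂) = some α ∨ φ s(w, w₂) = some β) (h₁₂ : s(v, w) ≠ s(w, w₂))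
    (hw : ∀ f, w ∈ f → (ψ f = some α ∨ ψ f = some β) → ψ f = φ f) (f : Sym2 V) (hwf : w ∈ f)
    (hf₂ : f ≠ s(w, w₂)) :
    ¬(Shift ψ s(u, v) s(v, w) f = some α ∨ Shift ψ s(u, v) s(v, w) f = some β) := by
  have hf₀ : f ≠ s(u, v) := by rintro rfl; simp [huw.symm, hvw.symm] at hwf
  by_cases hf₁ : f = s(v, w)
  · subst hf₁
    simp [shift_apply_right _ hf₀]
  rw [shift_apply_of_ne _ hf₀ hf₁]
  intro hc
  rcases hφ.eq_or_eq_of_mem_of_colors hwf (Sym2.mem_mk_right v w) (Sym2.mem_mk_left w w₂) h₁₂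
    (hw f hwf hc ▸ hc) h₁ h₂ with h | h
  exacts [hf₁ h, hf₂ h]

theorem shift_apply_ne_of_mem {u v w w₂ : V} (hφ : IsProperPartial G Δ φ)
    (hne : s(u, v) ≠ s(v, w)) (hψ₁ : ψ s(v, w) = φ s(v, w))
    (h₁ : φ s(v, w) = some α ∨ φ s(v, w) = some β)
    (h₂ : φ s(w, w₂) = some α ∨ φ s(w, w₂) = some β) (h₁₂ : s(v, w) ≠ s(w, w₂))
    (hv : ∀ f, v ∈ f → f ≠ s(v, w) → ¬(ψ f = some α ∨ ψ f = some β)) (f : Sym2 V)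
    (hvf : v ∈ f) : Shift ψ s(u, v) s(v, w) f ≠ φ s(w, w₂) := by
  by_cases hf₀ : f = s(u, v)
  · subst hf₀
    rw [shift_apply_left, hψ₁]
    exact hφ.apply_ne_of_mem h₁₂ (Sym2.mem_mk_right v w) (Sym2.mem_mk_left w w₂)
      (by rcases h₁ with c | c <;> simp [c])
  by_cases hf₁ : f = s(v, w)
  · subst hf₁
    rw [shift_apply_right _ hne.symm]
    rcases h₂ with c | c <;> simp [c]
  rw [shift_apply_of_ne _ hf₀ hf₁]
  exact fun h => hv f hvf hf₁ (h ▸ h₂)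

/-- `ψ` is `φ` after shifting the chain up to the edge `uv`; `hinner` says that no new `αβ`-colour
has reached the inner vertices of the path still ahead. -/
theorem chainShiftable_of_alternating (hφ : IsProperPartial G Δ φ) {u v w z : V}
    (h : (abSub G Δ φ α β).Adj v w) (q : (abSub G Δ φ α β).Walk w z)
    (hp : (Walk.cons h q).IsPath) (hψ : IsProperPartial G Δ ψ) (huv : G.Adj u v)
    (h₀ : ψ s(u, v) = none) (hψ₁ : ψ s(v, w) = φ s(v, w)) (hagree : ∀ f ∈ q.edges, ψ f = φ f)
    (hinner : ∀ w' ∈ q.support, w' ≠ z → ∀ f, w' ∈ f →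
      (ψ f = some α ∨ ψ f = some β) → ψ f = φ f)
    (hv : ∀ f, v ∈ f → f ≠ s(v, w) → ¬(ψ f = some α ∨ ψ f = some β))
    (hu : ∀ f, u ∈ f → ψ f ≠ φ s(v, w)) (huz : u ∈ q.support → u = z) :
    ChainShiftable G Δ (s(u, v) :: s(v, w) :: q.edges) ψ := by
  induction q generalizing u v ψ with
  | nil =>
    have hpair := shiftablePair_of_colors hψ huv h₀ (hψ₁ ▸ h.2) hv (hψ₁ ▸ hu)
    exact ⟨hpair, shift_apply_right _ hpair.1.1.symm, G.mem_edgeSet.2 h.1⟩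
  | @cons w w₂ z h' q' ih =>
    have hpair := shiftablePair_of_colors hψ huv h₀ (hψ₁ ▸ h.2) hv (hψ₁ ▸ hu)
    have hne : s(u, v) ≠ s(v, w) := hpair.1.1
    have hv_q : v ∉ (Walk.cons h' q').support := (List.nodup_cons.1 hp.support_nodup).1
    have hvw_q : s(v, w) ∉ (Walk.cons h' q').edges :=
      (List.nodup_cons.1 hp.isTrail.edges_nodup).1
    have h₁₂ : s(v, w) ≠ s(w, w₂) := fun e => hvw_q (e ▸ List.mem_cons_self)
    have hwz : w ≠ z := by
      rintro rfl
      exact (List.nodup_cons.1 hp.of_cons.support_nodup).1 q'.end_mem_support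
    have huw : u ≠ w := by rintro rfl; exact hne Sym2.eq_swap
    have hagree' : ∀ f ∈ (Walk.cons h' q').edges, Shift ψ s(u, v) s(v, w) f = φ f := by
      intro f hf
      have hf₁ : f ≠ s(v, w) := fun e => hvw_q (e ▸ hf)
      have hf₀ : f ≠ s(u, v) := by
        rintro rfl
        exact hv_q (Walk.snd_mem_support_of_mem_edges _ hf)
      rw [shift_apply_of_ne _ hf₀ hf₁]
      exact hagree f hf
    refine ⟨hpair, ih h' hp.of_cons (hpair.2.2.2.2) h.1 (shift_apply_right _ hne.symm)
      (hagree' _ List.mem_cons_self) (fun f hf => hagree' f (List.mem_cons_of_mem _ hf))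
      ?inner ?new_v ?new_u (fun hv' => absurd (List.mem_cons_of_mem _ hv') hv_q)⟩
    case inner =>
      intro w' hw' hw'z f hw'f hc
      have hw'q : w' ∈ (Walk.cons h' q').support := List.mem_cons_of_mem _ hw'
      have hf₀ : f ≠ s(u, v) := by
        rintro rfl
        rcases Sym2.mem_iff.1 hw'f with rfl | rfl
        exacts [hw'z (huz hw'q), hv_q hw'q]
      by_cases hf₁ : f = s(v, w)
      · subst hf₁
        simp [shift_apply_right _ hf₀] at hc
      rw [shift_apply_of_ne _ hf₀ hf₁] at hc ⊢
      exact hinner w' hw'q hw'z f hw'f hc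
    case new_v =>
      exact not_colors_shift_of_mem hφ huw h.ne h.2 h'.2 h₁₂
        (hinner w (Walk.start_mem_support _) hwz)
    case new_u =>
      exact shift_apply_ne_of_mem hφ hne hψ₁ h.2 h'.2 h₁₂ hv

end Shifting

theorem alternating_chain_shiftable_general [Fintype V] (G : SimpleGraph V) (Δ : ℕ)
    (φ : Sym2 V → Option (Fin (Δ + 1))) (hφ : IsProperPartial G Δ φ)
    (α β : Fin (Δ + 1)) (hab : α ≠ β) (x y z : V) (hadj : G.Adj x y)
    (hunc : φ s(x, y) = none)
    (hnothappy : missingColors G Δ φ x ∩ missingColors G Δ φ y = ∅)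
    (hx : ((abSub G Δ φ α β).neighborSet x).ncard < 2)
    (hy : ((abSub G Δ φ α β).neighborSet y).ncard < 2)
    (W : (abSub G Δ φ α β).Walk y z) (hWp : W.IsPath) :
    ChainShiftable G Δ (s(x, y) :: W.edges) φ := by
  cases W with
  | nil => exact ⟨hunc, G.mem_edgeSet.2 hadj⟩
  | @cons _ v _ h q =>
    have hxz : x ∈ q.support → x = z := fun hxq => by
      by_contra hne
      have := hWp.two_le_ncard_neighborSet (List.mem_cons_of_mem _ hxq) hadj.ne hne
      omega
    refine chainShiftable_of_alternating hφ h q hWp hφ hadj hunc rfl (fun _ _ => rfl)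
      (fun _ _ _ _ _ _ => rfl) ?_ ?_ hxz
    · intro f hyf hf hc
      obtain ⟨b, rfl, hb⟩ := exists_abSub_adj_of_mem hφ hyf hc
      exact hf (by rw [eq_of_abSub_adj hy hb h])
    · intro f hxf hc
      obtain ⟨a, rfl, ha⟩ := exists_abSub_adj_of_mem hφ hxf (hc ▸ h.2)
      exact (inter_missingColors_nonempty_of_abSub_adj hab hx hy ha h hc).ne_empty hnothappy

/-- for a `(φ,αβ)`-hopeful uncolored edge `xy` (not `φ`-happy, both endpoints
of degree `< 2` in the `αβ`-subgraph), the chain `P(x,y,φ,αβ)` consisting of `xy` followed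
by the maximal `αβ`-alternating path starting at `y` is `φ`-shiftable. -/
theorem alternating_chain_shiftable [Fintype V] (G : SimpleGraph V) (Δ : ℕ)
    (φ : Sym2 V → Option (Fin (Δ + 1))) (hφ : IsProperPartial G Δ φ)
    (α β : Fin (Δ + 1)) (hab : α ≠ β) (x y z : V) (hadj : G.Adj x y)
    (hunc : φ s(x, y) = none)
    (hnothappy : missingColors G Δ φ x ∩ missingColors G Δ φ y = ∅)
    (hx : ((abSub G Δ φ α β).neighborSet x).ncard < 2)
    (hy : ((abSub G Δ φ α β).neighborSet y).ncard < 2)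
    (W : (abSub G Δ φ α β).Walk y z) (hWp : W.IsPath)
    (hWmax : ∀ w, (abSub G Δ φ α β).Adj z w → s(z, w) ∈ W.edges) :
    ChainShiftable G Δ (s(x, y) :: W.edges) φ :=
  alternating_chain_shiftable_general G Δ φ hφ α β hab x y z hadj hunc hnothappy hx hy W hWp
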